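/- With contact forces Fᵢᶜᵒⁿᵗ = (Mᵢ/Δt)·((vᶜᵐ - vᵢᵗʳˡ)·n)·n where n is a common unit vector (with n₁ = n = -n₂ used for the respective fields, i.e. Fᵢᶜᵒⁿᵗ = (Mᵢ/Δt)((vᶜᵐ - vᵢᵗʳˡ)·nᵢ)nᵢ with n₁ = -n₂), the corrected velocities vᵢ = vᵢᵗʳˡ + Δt·Fᵢᶜᵒⁿᵗ/Mᵢ satisfy the impenetrability condition (v₁ - v₂)·n₁ = 0. -/

import Mathlib

open scoped RealInnerProductSpace

/-!
Adding `⟪vcm - v, n⟫ • n` to `v` replaces its component along the unit vector `n` by that of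
`vcm`. The correction of the second field is unchanged by the sign flip `n₂ = -n₁`, so both
corrected velocities have normal component `⟪vcm, n₁⟫`.
-/

section

variable {E : Type*} [NormedAddCommGroup E] [InnerProductSpace ℝ E]

theorem inner_neg_right_smul_neg (x n : E) : ⟪x, -n⟫ • -n = ⟪x, n⟫ • n := by
  rw [inner_neg_right, neg_smul_neg]

theorem inner_add_inner_sub_smul_self_of_norm_eq_one {n : E} (hn : ‖n‖ = 1) (v w : E) :
    ⟪v + ⟪w - v, n⟫ • n, n⟫ = ⟪w, n⟫ := by
  rw [inner_add_left, real_inner_smul_left, real_inner_self_eq_norm_sq, hn, inner_sub_left]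
  ring

end

theorem impenetrability_after_normal_correction_general
    {d : ℕ}
    (v₁t v₂t vcm n₁ n₂ v₁ v₂ : EuclideanSpace ℝ (Fin d))
    (hn : ‖n₁‖ = 1) (hn₂ : n₂ = -n₁)
    (hv₁ : v₁ = v₁t + ⟪vcm - v₁t, n₁⟫ • n₁)
    (hv₂ : v₂ = v₂t + ⟪vcm - v₂t, n₂⟫ • n₂) :
    ⟪v₁ - v₂, n₁⟫ = 0 := by
  rw [hn₂, inner_neg_right_smul_neg] at hv₂
  rw [inner_sub_left, hv₁, hv₂, inner_add_inner_sub_smul_self_of_norm_eq_one hn,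
    inner_add_inner_sub_smul_self_of_norm_eq_one hn, sub_self]

theorem impenetrability_after_normal_correction
    {d : ℕ} (M₁ M₂ Δt : ℝ) (hM₁ : 0 < M₁) (hM₂ : 0 < M₂) (hΔt : 0 < Δt)
    (v₁t v₂t vcm n₁ n₂ v₁ v₂ : EuclideanSpace ℝ (Fin d))
    (hvcm : vcm = (M₁ + M₂)⁻¹ • (M₁ • v₁t + M₂ • v₂t))
    (hn : ‖n₁‖ = 1) (hn₂ : n₂ = -n₁)
    (hv₁ : v₁ = v₁t + ⟪vcm - v₁t, n₁⟫ • n₁)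
    (hv₂ : v₂ = v₂t + ⟪vcm - v₂t, n₂⟫ • n₂) :
    ⟪v₁ - v₂, n₁⟫ = 0 :=
  impenetrability_after_normal_correction_general v₁t v₂t vcm n₁ n₂ v₁ v₂ hn hn₂ hv₁ hv₂
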